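/- The automorphism group of the solution S(G × ℤ/nℤ, c) acts regularly (i.e. transitively and freely) on G × ℤ/nℤ. In particular, for each g ∈ G and k ∈ ℤ/nℤ, the map Φ(a,i) = (a + Σ_{ℓ=1}^{i}(c(−ℓ) − c(−k−ℓ)) + g, k+i) is an automorphism of the solution sending (0,0) to (g,k). -/
import Mathlib


/-- The left translation `σ_{(a,i)}` of the solution `S(G × ℤ/nℤ, c)`. -/
def SσE {G : Type*} [AddCommGroup G] {n : ℕ} (c : ZMod n → G) (x : G × ZMod n) :
    Equiv.Perm (G × ZMod n) where
  toFun y := (y.1 + c (x.2 - y.2 - 1) - c (-y.2 - 1), y.2 + 1)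
  invFun y := (y.1 - c (x.2 - y.2) + c (-y.2), y.2 - 1)
  left_inv y := by
    obtain ⟨b, j⟩ := y
    have h1 : x.2 - (j + 1) = x.2 - j - 1 := by ring
    have h2 : -(j + 1) = -j - 1 := by ring
    simp only [h1, h2, Prod.mk.injEq]
    constructor
    · abel
    · ring
  right_inv y := by
    obtain ⟨b, j⟩ := y
    have h1 : x.2 - (j - 1) - 1 = x.2 - j := by ring
    have h2 : -(j - 1) - 1 = -j := by ring
    simp only [h1, h2, Prod.mk.injEq]
    constructor
    · abel
    · ring

/-- The permutation group of `S(G × ℤ/nℤ, c)`. -/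
def SGX {G : Type*} [AddCommGroup G] {n : ℕ} (c : ZMod n → G) :
    Subgroup (Equiv.Perm (G × ZMod n)) :=
  Subgroup.closure (Set.range (SσE c))

/-- The displacement group of `S(G × ℤ/nℤ, c)`. -/
def SDis {G : Type*} [AddCommGroup G] {n : ℕ} (c : ZMod n → G) :
    Subgroup (Equiv.Perm (G × ZMod n)) :=
  Subgroup.closure {g | ∃ x y : G × ZMod n, g = SσE c x * (SσE c y)⁻¹}

section Aux

variable {G : Type*} [AddCommGroup G] {n : ℕ}

lemma SσE_apply (c : ZMod n → G) (x : G × ZMod n) (b : G) (j : ZMod n) :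
    SσE c x (b, j) = (b + c (x.2 - j - 1) - c (-j - 1), j + 1) := rfl

lemma sum_range_zmod [NeZero n] (h : ZMod n → G) :
    ∑ ℓ ∈ Finset.range n, h (ℓ : ZMod n) = ∑ x : ZMod n, h x := by
  refine Finset.sum_nbij' (fun ℓ => (ℓ : ZMod n)) (fun x => x.val) ?_ ?_ ?_ ?_ ?_
  · intro a ha; exact Finset.mem_univ _
  · intro a ha; exact Finset.mem_range.mpr (ZMod.val_lt a)
  · intro a ha; exact ZMod.val_cast_of_lt (Finset.mem_range.mp ha)
  · intro a ha; simp [ZMod.natCast_val, ZMod.cast_id]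
  · intro a ha; rfl

lemma sum_shift [NeZero n] (c : ZMod n → G) (u : ZMod n) :
    ∑ ℓ ∈ Finset.range n, c (u - (ℓ : ZMod n) - 1) = ∑ x : ZMod n, c x := by
  rw [sum_range_zmod (fun x => c (u - x - 1))]
  have h : ∀ x : ZMod n, u - x - 1 = (Equiv.subLeft (u - 1)) x := by
    intro x; simp only [Equiv.subLeft_apply]; ring
  calc ∑ x : ZMod n, c (u - x - 1) = ∑ x : ZMod n, c ((Equiv.subLeft (u-1)) x) :=
        Finset.sum_congr rfl (fun x _ => by rw [h])
    _ = ∑ x : ZMod n, c x := Equiv.sum_comp _ c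

/-- The cocycle sum. -/
def Sf (c : ZMod n → G) (k i : ZMod n) : G :=
  ∑ ℓ ∈ Finset.range i.val, (c (-((ℓ : ZMod n) + 1)) - c (-k - ((ℓ : ZMod n) + 1)))

lemma Sf_step [NeZero n] (c : ZMod n → G) (hc0 : c 0 = 0) (k j : ZMod n) :
    Sf c k (j + 1) = Sf c k j + (c (-j - 1) - c (-k - j - 1)) := by
  have hjv : ((j.val : ℕ) : ZMod n) = j := by simp [ZMod.natCast_val, ZMod.cast_id]
  by_cases hv : j.val + 1 < n
  · haveI : Fact (1 < n) := ⟨by omega⟩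
    have h1 : (j + 1).val = j.val + 1 := by
      rw [ZMod.val_add_of_lt] <;> rw [ZMod.val_one]
      omega
    unfold Sf
    rw [h1, Finset.sum_range_succ, hjv]
    congr 1
    have e1 : -(j + 1) = -j - 1 := by ring
    have e2 : -k - (j + 1) = -k - j - 1 := by ring
    rw [e1, e2]
  · have hlt := ZMod.val_lt j
    have hn : j.val + 1 = n := by omega
    have hj1 : j + 1 = 0 := by
      rw [← hjv, ← Nat.cast_one, ← Nat.cast_add, hn, ZMod.natCast_self]
    have hfull : ∑ ℓ ∈ Finset.range n,
        (c (-((ℓ : ZMod n) + 1)) - c (-k - ((ℓ : ZMod n) + 1))) = 0 := by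
      rw [Finset.sum_sub_distrib]
      have e12 : (∑ ℓ ∈ Finset.range n, c (-((ℓ : ZMod n) + 1))) -
          (∑ ℓ ∈ Finset.range n, c (-k - ((ℓ : ZMod n) + 1))) =
          (∑ ℓ ∈ Finset.range n, c ((0 : ZMod n) - (ℓ : ZMod n) - 1)) -
          (∑ ℓ ∈ Finset.range n, c (-k - (ℓ : ZMod n) - 1)) := by
        apply congrArg₂ Sub.sub <;>
          exact Finset.sum_congr rfl (fun ℓ _ => by ring_nf)
      rw [e12, sum_shift c 0, sum_shift c (-k), sub_self]
    have hr : Finset.range n = Finset.range (j.val + 1) := by rw [hn]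
    rw [hr, Finset.sum_range_succ, hjv] at hfull
    have e3 : -(j + 1) = (0 : ZMod n) := by rw [hj1, neg_zero]
    have e4 : -k - (j + 1) = -k := by rw [hj1]; ring
    rw [e3, e4, hc0, zero_sub] at hfull
    have hSfj : Sf c k j = c (-k) := by
      unfold Sf
      rw [← sub_eq_add_neg] at hfull
      exact sub_eq_zero.mp hfull
    have hSf0 : Sf c k (j + 1) = 0 := by
      unfold Sf; rw [hj1, ZMod.val_zero, Finset.sum_range_zero]
    have e5 : -j - 1 = (0 : ZMod n) := by
      have h7 : -j - 1 = -(j + 1) := by ring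
      rw [h7, e3]
    have e6 : -k - j - 1 = -k := by
      have h7 : -k - j - 1 = -k - (j + 1) := by ring
      rw [h7, e4]
    rw [hSf0, hSfj, e5, e6, hc0]
    abel

/-- The explicit automorphism. -/
def SΦ [NeZero n] (c : ZMod n → G) (k : ZMod n) (g : G) : Equiv.Perm (G × ZMod n) where
  toFun y := (y.1 + Sf c k y.2 + g, k + y.2)
  invFun y := (y.1 - Sf c k (y.2 - k) - g, y.2 - k)
  left_inv y := by
    obtain ⟨a, i⟩ := y
    have e : k + i - k = i := by ring
    simp only [e, Prod.mk.injEq]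
    exact ⟨by abel, trivial⟩
  right_inv y := by
    obtain ⟨a, i⟩ := y
    have e : k + (i - k) = i := by ring
    simp only [e, Prod.mk.injEq]
    exact ⟨by abel, trivial⟩

lemma SΦ_apply [NeZero n] (c : ZMod n → G) (k : ZMod n) (g : G) (a : G) (i : ZMod n) :
    SΦ c k g (a, i) = (a + Sf c k i + g, k + i) := rfl

lemma SΦ_aut [NeZero n] (c : ZMod n → G) (hc0 : c 0 = 0) (k : ZMod n) (g : G) :
    ∀ x y : G × ZMod n, SΦ c k g (SσE c x y) = SσE c (SΦ c k g x) (SΦ c k g y) := by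
  intro x y
  obtain ⟨a, i⟩ := x
  obtain ⟨b, j⟩ := y
  simp only [SσE_apply, SΦ_apply]
  have e2 : k + i - (k + j) - 1 = i - j - 1 := by ring
  have e3 : -(k + j) - 1 = -k - j - 1 := by ring
  rw [e2, e3, Sf_step c hc0 k j]
  refine Prod.ext ?_ ?_
  · show b + c (i - j - 1) - c (-j - 1) + (Sf c k j + (c (-j - 1) - c (-k - j - 1))) + g
      = b + Sf c k j + g + c (i - j - 1) - c (-k - j - 1)
    abel
  · show k + (j + 1) = k + j + 1
    ring

/-- An automorphism with a fixed point is the identity. -/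
lemma aut_fixed [NeZero n] (c : ZMod n → G) (hc0 : c 0 = 0)
    (hgen : AddSubgroup.closure (Set.range c) = ⊤) (Φ : Equiv.Perm (G × ZMod n))
    (hΦ : ∀ x y : G × ZMod n, Φ (SσE c x y) = SσE c (Φ x) (Φ y)) (p : G × ZMod n)
    (hp : Φ p = p) : Φ = Equiv.refl _ := by
  have hkey : ∀ (m : ZMod n) (b : G) (j : ZMod n),
      Φ (b + c m - c (-j - 1), j + 1) = SσE c (Φ (0, m + j + 1)) (Φ (b, j)) := by
    intro m b j
    have h := hΦ (0, m + j + 1) (b, j)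
    rw [SσE_apply] at h
    rw [show m + j + 1 - j - 1 = m by ring] at h
    exact h
  have h2 : ∀ (m : ZMod n) (b : G) (j : ZMod n),
      (Φ (b + c m - c (-j - 1), j + 1)).2 = (Φ (b, j)).2 + 1 := by
    intro m b j; rw [hkey m b j]; rfl
  have hB1 : ∀ (i : ZMod n) (b : G) (m : ZMod n), (Φ (b + c m, i)).2 = (Φ (b, i)).2 := by
    intro i b m
    have e : i - 1 + 1 = i := by ring
    have a1 := h2 m (b + c (-(i-1) - 1)) (i - 1)
    have a2 := h2 0 (b + c (-(i-1) - 1)) (i - 1)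
    rw [e] at a1 a2
    rw [show b + c (-(i-1)-1) + c m - c (-(i-1)-1) = b + c m by abel] at a1
    rw [hc0, show b + c (-(i-1)-1) + 0 - c (-(i-1)-1) = b by abel] at a2
    rw [a1, a2]
  have hB : ∀ (i : ZMod n) (b : G), (Φ (b, i)).2 = (Φ (0, i)).2 := by
    intro i b
    have hb : b ∈ AddSubgroup.closure (Set.range c) := by rw [hgen]; trivial
    have main : ∀ d ∈ AddSubgroup.closure (Set.range c), ∀ b' : G,
        (Φ (b' + d, i)).2 = (Φ (b', i)).2 := by
      intro d hd
      refine AddSubgroup.closure_induction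
        (p := fun d _ => ∀ b' : G, (Φ (b' + d, i)).2 = (Φ (b', i)).2) ?_ ?_ ?_ ?_ hd
      · rintro x ⟨m, rfl⟩ b'; exact hB1 i b' m
      · intro b'; rw [add_zero]
      · intro x y hx hy ihx ihy b'
        rw [← add_assoc, ihy (b' + x), ihx b']
      · intro x hx ih b'
        have h3 := ih (b' + -x)
        rw [add_assoc, neg_add_cancel, add_zero] at h3
        exact h3.symm
    have h4 := main b hb 0
    rwa [zero_add] at h4
  have hBstep : ∀ j : ZMod n, (Φ (0, j + 1)).2 = (Φ (0, j)).2 + 1 := by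
    intro j
    have h3 := h2 0 0 j
    rw [hB (j + 1) (0 + c 0 - c (-j - 1))] at h3
    exact h3
  have hβ : ∀ j : ZMod n, (Φ (0, j)).2 = j + (Φ ((0:G), (0:ZMod n))).2 := by
    have hm : ∀ m : ℕ, (Φ (0, (m : ZMod n))).2 = (m : ZMod n) + (Φ ((0:G), (0:ZMod n))).2 := by
      intro m
      induction m with
      | zero => rw [Nat.cast_zero, zero_add]
      | succ m ih => rw [Nat.cast_succ, hBstep, ih]; ring
    intro j
    have h3 := hm j.val
    rwa [show ((j.val : ℕ) : ZMod n) = j from by simp [ZMod.natCast_val, ZMod.cast_id]] at h3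
  have ht : (Φ ((0:G), (0:ZMod n))).2 = 0 := by
    have h1 : (Φ p).2 = p.2 := by rw [hp]
    have h2' : (Φ p).2 = p.2 + (Φ ((0:G), (0:ZMod n))).2 := by
      calc (Φ p).2 = (Φ (p.1, p.2)).2 := rfl
        _ = (Φ (0, p.2)).2 := hB p.2 p.1
        _ = p.2 + (Φ ((0:G), (0:ZMod n))).2 := hβ p.2
    have h4 : p.2 + (Φ ((0:G), (0:ZMod n))).2 = p.2 + 0 := by rw [add_zero, ← h2', h1]
    exact add_left_cancel h4
  have hB2 : ∀ (b : G) (j : ZMod n), (Φ (b, j)).2 = j := by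
    intro b j; rw [hB, hβ, ht, add_zero]
  have h1c : ∀ (m : ZMod n) (b : G) (j : ZMod n),
      (Φ (b + c m - c (-j - 1), j + 1)).1 = (Φ (b, j)).1 + c m - c (-j - 1) := by
    intro m b j
    have hk := congrArg Prod.fst (hkey m b j)
    have eσ : (SσE c (Φ (0, m + j + 1)) (Φ (b, j))).1
        = (Φ (b, j)).1 + c ((Φ (0, m + j + 1)).2 - (Φ (b, j)).2 - 1)
          - c (-(Φ (b, j)).2 - 1) := rfl
    rw [eσ, hB2, hB2] at hk
    rw [show m + j + 1 - j - 1 = m by ring] at hk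
    exact hk
  have hA1 : ∀ (i : ZMod n) (b : G) (m : ZMod n), (Φ (b + c m, i)).1 = (Φ (b, i)).1 + c m := by
    intro i b m
    have e : i - 1 + 1 = i := by ring
    have a1 := h1c m (b + c (-(i-1) - 1)) (i - 1)
    have a2 := h1c 0 (b + c (-(i-1) - 1)) (i - 1)
    rw [e] at a1 a2
    rw [show b + c (-(i-1)-1) + c m - c (-(i-1)-1) = b + c m by abel] at a1
    rw [hc0, show b + c (-(i-1)-1) + 0 - c (-(i-1)-1) = b by abel] at a2
    rw [a1, a2]
    abel
  have hA : ∀ (i : ZMod n) (b : G), (Φ (b, i)).1 = (Φ (0, i)).1 + b := by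
    intro i b
    have hb : b ∈ AddSubgroup.closure (Set.range c) := by rw [hgen]; trivial
    have main : ∀ d ∈ AddSubgroup.closure (Set.range c), ∀ b' : G,
        (Φ (b' + d, i)).1 = (Φ (b', i)).1 + d := by
      intro d hd
      refine AddSubgroup.closure_induction
        (p := fun d _ => ∀ b' : G, (Φ (b' + d, i)).1 = (Φ (b', i)).1 + d) ?_ ?_ ?_ ?_ hd
      · rintro x ⟨m, rfl⟩ b'; exact hA1 i b' m
      · intro b'; rw [add_zero, add_zero]
      · intro x y hx hy ihx ihy b'
        rw [← add_assoc, ihy (b' + x), ihx b', add_assoc]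
      · intro x hx ih b'
        have h3 := ih (b' + -x)
        rw [add_assoc, neg_add_cancel, add_zero] at h3
        rw [h3]
        abel
    have h4 := main b hb 0
    rwa [zero_add] at h4
  have hAstep : ∀ j : ZMod n, (Φ (0, j + 1)).1 = (Φ (0, j)).1 := by
    intro j
    have a := h1c 0 (c (-j - 1)) j
    rw [hc0] at a
    rw [show c (-j-1) + 0 - c (-j-1) = (0:G) by abel] at a
    rw [hA j (c (-j - 1))] at a
    rw [a]
    abel
  have hα : ∀ j : ZMod n, (Φ (0, j)).1 = (Φ ((0:G), (0:ZMod n))).1 := by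
    have hm : ∀ m : ℕ, (Φ (0, (m : ZMod n))).1 = (Φ ((0:G), (0:ZMod n))).1 := by
      intro m
      induction m with
      | zero => rw [Nat.cast_zero]
      | succ m ih => rw [Nat.cast_succ, hAstep, ih]
    intro j
    have h3 := hm j.val
    rwa [show ((j.val : ℕ) : ZMod n) = j from by simp [ZMod.natCast_val, ZMod.cast_id]] at h3
  have hα0 : (Φ ((0:G), (0:ZMod n))).1 = 0 := by
    have h1 : (Φ p).1 = p.1 := by rw [hp]
    have h2' : (Φ p).1 = (Φ ((0:G), (0:ZMod n))).1 + p.1 := by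
      calc (Φ p).1 = (Φ (p.1, p.2)).1 := rfl
        _ = (Φ (0, p.2)).1 + p.1 := hA p.2 p.1
        _ = (Φ ((0:G), (0:ZMod n))).1 + p.1 := by rw [hα p.2]
    have h4 : (Φ ((0:G), (0:ZMod n))).1 + p.1 = 0 + p.1 := by rw [zero_add, ← h2', h1]
    exact add_right_cancel h4
  apply Equiv.ext
  rintro ⟨b, j⟩
  have e1 : (Φ (b, j)).1 = b := by rw [hA, hα, hα0, zero_add]
  have e2 := hB2 b j
  show Φ (b, j) = (b, j)
  exact Prod.ext e1 e2

lemma aut_symm (c : ZMod n → G) (Φ : Equiv.Perm (G × ZMod n))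
    (hΦ : ∀ x y : G × ZMod n, Φ (SσE c x y) = SσE c (Φ x) (Φ y)) :
    ∀ x y : G × ZMod n, Φ.symm (SσE c x y) = SσE c (Φ.symm x) (Φ.symm y) := by
  intro x y
  apply Φ.injective
  rw [Φ.apply_symm_apply, hΦ, Φ.apply_symm_apply, Φ.apply_symm_apply]

end Aux

/-- The automorphism group of `S(G × ℤ/nℤ, c)` acts regularly (transitively and freely);
in particular, for each `g ∈ G` and `k ∈ ℤ/nℤ`, the map
`Φ(a,i) = (a + Σ_{ℓ=1}^{i}(c(−ℓ) − c(−k−ℓ)) + g, k+i)` is an automorphism of the solution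
sending `(0,0)` to `(g,k)`. -/
theorem construction_aut_regular {G : Type*} [AddCommGroup G] {n : ℕ} (hn : 1 ≤ n)
    (c : ZMod n → G) (hc0 : c 0 = 0)
    (hgen : AddSubgroup.closure (Set.range c) = ⊤) :
    (∀ p q : G × ZMod n, ∃ Φ : Equiv.Perm (G × ZMod n),
      (∀ x y : G × ZMod n, Φ (SσE c x y) = SσE c (Φ x) (Φ y)) ∧ Φ p = q) ∧
    (∀ Φ₁ Φ₂ : Equiv.Perm (G × ZMod n),
      (∀ x y : G × ZMod n, Φ₁ (SσE c x y) = SσE c (Φ₁ x) (Φ₁ y)) →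
      (∀ x y : G × ZMod n, Φ₂ (SσE c x y) = SσE c (Φ₂ x) (Φ₂ y)) →
      (∃ p : G × ZMod n, Φ₁ p = Φ₂ p) → Φ₁ = Φ₂) ∧
    (∀ (g : G) (k : ZMod n), ∃ Φ : Equiv.Perm (G × ZMod n),
      (∀ x y : G × ZMod n, Φ (SσE c x y) = SσE c (Φ x) (Φ y)) ∧
      (∀ (a : G) (i : ZMod n), Φ (a, i) =
        (a + (∑ ℓ ∈ Finset.range i.val,
          (c (-((ℓ : ZMod n) + 1)) - c (-k - ((ℓ : ZMod n) + 1)))) + g, k + i)) ∧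
      Φ ((0 : G), (0 : ZMod n)) = (g, k)) := by
  haveI : NeZero n := ⟨by omega⟩
  have part3 : ∀ (g : G) (k : ZMod n), ∃ Φ : Equiv.Perm (G × ZMod n),
      (∀ x y : G × ZMod n, Φ (SσE c x y) = SσE c (Φ x) (Φ y)) ∧
      (∀ (a : G) (i : ZMod n), Φ (a, i) =
        (a + (∑ ℓ ∈ Finset.range i.val,
          (c (-((ℓ : ZMod n) + 1)) - c (-k - ((ℓ : ZMod n) + 1)))) + g, k + i)) ∧
      Φ ((0 : G), (0 : ZMod n)) = (g, k) := by
    intro g k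
    have h0 : Sf c k 0 = 0 := by
      unfold Sf; rw [ZMod.val_zero, Finset.sum_range_zero]
    refine ⟨SΦ c k g, SΦ_aut c hc0 k g, fun a i => SΦ_apply c k g a i, ?_⟩
    rw [SΦ_apply]
    refine Prod.ext ?_ ?_
    · show 0 + Sf c k 0 + g = g
      rw [h0]; abel
    · show k + 0 = k
      ring
  refine ⟨?_, ?_, part3⟩
  · intro p q
    obtain ⟨Φp, hΦp, -, hp0⟩ := part3 p.1 p.2
    obtain ⟨Φq, hΦq, -, hq0⟩ := part3 q.1 q.2
    refine ⟨Φp.symm.trans Φq, ?_, ?_⟩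
    · intro x y
      have h1 := aut_symm c Φp hΦp
      show Φq (Φp.symm (SσE c x y)) = _
      rw [h1, hΦq]
      rfl
    · show Φq (Φp.symm p) = q
      have hsp : Φp.symm p = ((0:G), (0:ZMod n)) := by
        rw [Equiv.symm_apply_eq, hp0]
      rw [hsp, hq0]
  · rintro Φ₁ Φ₂ h1 h2 ⟨p, hp⟩
    have hsym := aut_symm c Φ₂ h2
    have hcomp : ∀ x y : G × ZMod n, (Φ₁.trans Φ₂.symm) (SσE c x y)
        = SσE c ((Φ₁.trans Φ₂.symm) x) ((Φ₁.trans Φ₂.symm) y) := by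
      intro x y
      show Φ₂.symm (Φ₁ (SσE c x y)) = _
      rw [h1, hsym]
      rfl
    have hfix : (Φ₁.trans Φ₂.symm) p = p := by
      show Φ₂.symm (Φ₁ p) = p
      rw [hp, Equiv.symm_apply_apply]
    have hid := aut_fixed c hc0 hgen _ hcomp p hfix
    apply Equiv.ext
    intro x
    have hx : Φ₂.symm (Φ₁ x) = x := by
      have : (Φ₁.trans Φ₂.symm) x = (Equiv.refl _) x := by rw [hid]
      exact this
    calc Φ₁ x = Φ₂ (Φ₂.symm (Φ₁ x)) := (Φ₂.apply_symm_apply _).symm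
      _ = Φ₂ x := by rw [hx]
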